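/- Let Δ be an oriented complete fan in ℝ^n and R a commutative ring. Then the maps d_k : Č_k(Δ,R) → Č_{k−1}(Δ,R) satisfy d_{k−1} ∘ d_k = 0 for all 2 ≤ k ≤ n; that is, (Č_*(Δ,R), d_*) is a chain complex of R-modules. -/

import Mathlib

/-!
If some cone `ρ` lies between a cone `τ` of codimension `j + 2` and a cone `σ` of codimension
`j`, then `τ` is a face of `σ` of codimension two, and modulo the span of `τ` the cone `σ` is a
pointed two-dimensional cone. It therefore has exactly two boundary rays, through vectors `a`
and `c`, and the cones between `τ` and `σ` are exactly the two faces `ρ_a`, `ρ_c` of `σ` over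
them. The coefficient of `[σ]` in `d (d [τ])` is `ε(τ,ρ_a) ε(ρ_a,σ) + ε(τ,ρ_c) ε(ρ_c,σ)`, and
these two products are the signs of the coefficients of `ι c ∧ ι a ∧ ω_τ` and `ι a ∧ ι c ∧ ω_τ`
with respect to `ω_σ`, which are opposite.
-/

open scoped RealInnerProductSpace

noncomputable section

abbrev Euc (n : ℕ) := EuclideanSpace ℝ (Fin n)

/-- A vector of `ℝ^n` has integral coordinates. -/
def IsIntegralVec {n : ℕ} (x : Euc n) : Prop := ∀ i, ∃ m : ℤ, x i = (m : ℝ)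

/-- A rational polyhedral cone in `ℝ^n`. -/
def IsRatPolyCone {n : ℕ} (σ : Set (Euc n)) : Prop :=
  ∃ (k : ℕ) (v : Fin k → Euc n), (∀ i, IsIntegralVec (v i)) ∧
    σ = {x | ∃ lam : Fin k → ℝ, (∀ i, 0 ≤ lam i) ∧ x = ∑ i, lam i • v i}

/-- Strict convexity of a cone: `σ ∩ (−σ) = {0}`. -/
def IsStrictlyConvexCone {n : ℕ} (σ : Set (Euc n)) : Prop := σ ∩ (-σ) = {0}

/-- The dual cone. -/
def dualCone {n : ℕ} (σ : Set (Euc n)) : Set (Euc n) := {u | ∀ x ∈ σ, 0 ≤ ⟪u, x⟫}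

/-- The orthogonal of a cone. -/
def orthCone {n : ℕ} (σ : Set (Euc n)) : Set (Euc n) := {u | ∀ x ∈ σ, ⟪u, x⟫ = 0}

/-- `τ` is a face of `σ`. -/
def IsFaceOf {n : ℕ} (τ σ : Set (Euc n)) : Prop :=
  ∃ u ∈ dualCone σ, τ = σ ∩ {x | ⟪u, x⟫ = 0}

/-- The dimension of a cone: the dimension of its linear span. -/
def coneDim {n : ℕ} (σ : Set (Euc n)) : ℕ := Module.finrank ℝ (Submodule.span ℝ σ)

/-- A fan in `ℝ^n`. -/
structure IsFan {n : ℕ} (Δ : Set (Set (Euc n))) : Prop where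
  finite : Δ.Finite
  poly : ∀ σ ∈ Δ, IsRatPolyCone σ
  strictconv : ∀ σ ∈ Δ, IsStrictlyConvexCone σ
  face_mem : ∀ σ ∈ Δ, ∀ τ, IsFaceOf τ σ → τ ∈ Δ
  inter_face : ∀ σ ∈ Δ, ∀ τ ∈ Δ, IsFaceOf (σ ∩ τ) σ ∧ IsFaceOf (σ ∩ τ) τ

/-- A complete fan: the union of the cones is everything. -/
def IsCompleteFan {n : ℕ} (Δ : Set (Set (Euc n))) : Prop :=
  IsFan Δ ∧ ⋃₀ Δ = Set.univ

/-- An orientation of a linear subspace `V ⊆ ℝ^n` of dimension `d`: a nonzero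
`d`-fold wedge `x₁ ∧ ⋯ ∧ x_d` (an element of the exterior algebra, lying in the
`d`-th exterior power) with `(x₁, …, x_d)` a basis of `V`.  For `V = {0}` this
is the empty product `1 ∈ Λ⁰(ℝ^n) = ℝ`. -/
def IsOrientationOf {n : ℕ} (V : Submodule ℝ (Euc n))
    (ω : ExteriorAlgebra ℝ (Euc n)) : Prop :=
  ∃ x : Fin (Module.finrank ℝ V) → Euc n,
    LinearIndependent ℝ x ∧ Submodule.span ℝ (Set.range x) = V ∧
      ω = (List.ofFn fun i => ExteriorAlgebra.ι ℝ (x i)).prod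

/-- An orientation of a fan: a choice, for each cone `σ ∈ Δ`, of an orientation
of the linear span `ℝσ`. -/
def IsFanOrientation {n : ℕ} (Δ : Set (Set (Euc n)))
    (ω : Set (Euc n) → ExteriorAlgebra ℝ (Euc n)) : Prop :=
  ∀ σ ∈ Δ, IsOrientationOf (Submodule.span ℝ σ) (ω σ)

/-- `ε` is the incidence-sign function of the oriented fan `(Δ, ω)`:
for `τ ≤ σ` with `dim σ = dim τ + 1`, `ε τ σ ∈ {±1}` is the sign of the unique
scalar `c_w` with `w ∧ ω_τ = c_w • ω_σ`, for any `w ∈ σ ∖ ℝτ`. -/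
def IsIncidenceSign {n : ℕ} (Δ : Set (Set (Euc n)))
    (ω : Set (Euc n) → ExteriorAlgebra ℝ (Euc n))
    (ε : Set (Euc n) → Set (Euc n) → ℤ) : Prop :=
  ∀ τ ∈ Δ, ∀ σ ∈ Δ, IsFaceOf τ σ → coneDim σ = coneDim τ + 1 →
    (ε τ σ = 1 ∨ ε τ σ = -1) ∧
    ∀ w ∈ σ \ (Submodule.span ℝ τ : Set (Euc n)), ∀ c : ℝ,
      ExteriorAlgebra.ι ℝ w * ω τ = c • ω σ → (ε τ σ = 1 ↔ 0 < c)

/-- `Δ^{(k)}`: the cones of `Δ` of codimension `k`, i.e. of dimension `n − k`. -/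
def ConesOfCodim (n : ℕ) (Δ : Set (Set (Euc n))) (k : ℕ) : Set (Set (Euc n)) :=
  {σ | σ ∈ Δ ∧ coneDim σ = n - k}

open scoped Classical in
/-- The differential `d_{k+1} : Č_{k+1}(Δ,R) → Č_k(Δ,R)` of the Čech complex of
the oriented fan `Δ`, on the free `R`-module with basis `Δ^{(k+1)}` (realized as
functions `Δ^{(k+1)} → R`): `d([τ]) = Σ_σ ε(τ,σ)[σ]`, the sum over the
`σ ∈ Δ^{(k)}` having `τ` as a face. -/
noncomputable def cechD {n : ℕ} (Δ : Set (Set (Euc n)))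
    (ε : Set (Euc n) → Set (Euc n) → ℤ) (R : Type*) [CommRing R] (k : ℕ)
    (x : ConesOfCodim n Δ (k + 1) → R) : ConesOfCodim n Δ k → R :=
  fun σ => ∑ᶠ τ : ConesOfCodim n Δ (k + 1),
    if IsFaceOf (τ : Set (Euc n)) (σ : Set (Euc n)) then (ε τ σ : R) * x τ else 0

open Submodule Set ExteriorAlgebra

section LinearAlgebra

variable {E : Type*} [NormedAddCommGroup E] [InnerProductSpace ℝ E]

lemma finrank_sup_span_singleton_le [FiniteDimensional ℝ E] (K : Submodule ℝ E) (v : E) :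
    Module.finrank ℝ ↥(K ⊔ ℝ ∙ v) ≤ Module.finrank ℝ K + 1 := by
  by_cases hv : v ∈ K
  · rw [sup_eq_left.mpr ((span_singleton_le_iff_mem v K).mpr hv)]
    exact Nat.le_succ _
  · exact (finrank_sup_span_singleton hv).le

lemma inner_eq_zero_of_mem_span {g : E} {s : Set E} (h : ∀ x ∈ s, ⟪g, x⟫ = 0) {x : E}
    (hx : x ∈ span ℝ s) : ⟪g, x⟫ = 0 := by
  have : span ℝ s ≤ LinearMap.ker (innerₛₗ ℝ g) := span_le.mpr h
  simpa using this hx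

lemma inner_sub_smul_sub_smul (g x a c : E) (α β : ℝ) :
    ⟪g, x - α • a - β • c⟫ = ⟪g, x⟫ - α * ⟪g, a⟫ - β * ⟪g, c⟫ := by
  rw [inner_sub_right, inner_sub_right, real_inner_smul_right, real_inner_smul_right]

lemma inner_eq_of_sub_sub_mem {W : Submodule ℝ E} {g x a c : E} {α β : ℝ}
    (hg : ∀ y ∈ W, ⟪g, y⟫ = 0) (hx : x - α • a - β • c ∈ W) :
    ⟪g, x⟫ = α * ⟪g, a⟫ + β * ⟪g, c⟫ := by
  linarith [inner_sub_smul_sub_smul g x a c α β, hg _ hx]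

lemma exists_inner_pos_of_notMem {K : Submodule ℝ E} [K.HasOrthogonalProjection] {c : E}
    (hc : c ∉ K) : ∃ g : E, (∀ x ∈ K, ⟪g, x⟫ = 0) ∧ 0 < ⟪g, c⟫ := by
  obtain ⟨y, hy, g, hg, rfl⟩ := K.exists_add_mem_mem_orthogonal c
  have hg0 : g ≠ 0 := by
    rintro rfl
    exact hc (by simpa using hy)
  refine ⟨g, fun x hx => ?_, ?_⟩
  · rw [real_inner_comm]
    exact (mem_orthogonal K g).mp hg x hx
  · rw [inner_add_right, real_inner_comm, (mem_orthogonal K g).mp hg y hy, zero_add]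
    exact real_inner_self_pos.mpr hg0

lemma exists_forall_inner_eq_zero_imp_mem [FiniteDimensional ℝ E] {W S : Submodule ℝ E}
    (hWS : W ≤ S) (hdim : Module.finrank ℝ S = Module.finrank ℝ W + 2) {u p : E} (hp : p ∈ S)
    (huW : ∀ x ∈ W, ⟪u, x⟫ = 0) (hup : ⟪u, p⟫ ≠ 0) :
    ∃ b : E, ∀ x ∈ S, ⟪u, x⟫ = 0 → ⟪b, x⟫ = 0 → x ∈ W := by
  have hpW : p ∉ W := fun h => hup (huW p h)
  set W₁ := W ⊔ ℝ ∙ p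
  have hW₁S : W₁ ≤ S := sup_le hWS ((span_singleton_le_iff_mem p S).mpr hp)
  have hW₁ : Module.finrank ℝ W₁ = Module.finrank ℝ W + 1 := finrank_sup_span_singleton hpW
  obtain ⟨b, ⟨hbW₁, hbS⟩, hb0⟩ : ∃ b ∈ W₁ᗮ ⊓ S, b ≠ 0 := by
    refine exists_mem_ne_zero_of_ne_bot fun hbot => ?_
    have h := sup_orthogonal_inf_of_hasOrthogonalProjection hW₁S
    rw [hbot, sup_bot_eq] at h
    have := congrArg (fun V : Submodule ℝ E => Module.finrank ℝ V) h
    omega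
  have hbb : ⟪b, b⟫ ≠ 0 := (real_inner_self_pos.mpr hb0).ne'
  have hbnot : b ∉ W₁ := fun h => hbb (inner_right_of_mem_orthogonal h hbW₁)
  have hS : W₁ ⊔ ℝ ∙ b = S := by
    refine eq_of_le_of_finrank_le (sup_le hW₁S ((span_singleton_le_iff_mem b S).mpr hbS)) ?_
    rw [finrank_sup_span_singleton hbnot]
    omega
  refine ⟨b, fun x hx hux hbx => ?_⟩
  rw [← hS] at hx
  obtain ⟨y, hy, _, hz, rfl⟩ := mem_sup.mp hx
  obtain ⟨t, rfl⟩ := mem_span_singleton.mp hz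
  obtain ⟨w, hw, _, hq, rfl⟩ := mem_sup.mp hy
  obtain ⟨s, rfl⟩ := mem_span_singleton.mp hq
  have hbw : ⟪b, w + s • p⟫ = 0 := inner_left_of_mem_orthogonal hy hbW₁
  rw [inner_add_right, hbw, real_inner_smul_right, zero_add] at hbx
  obtain rfl : t = 0 := (mul_eq_zero.mp hbx).resolve_right hbb
  rw [zero_smul, add_zero, inner_add_right, huW w hw, real_inner_smul_right, zero_add] at hux
  obtain rfl : s = 0 := (mul_eq_zero.mp hux).resolve_right hup
  simpa using hw

end LinearAlgebra

section Exterior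

variable {K M N : Type*} [Field K] [AddCommGroup M] [Module K M] [AddCommGroup N] [Module K N]

lemma Module.Basis.alternatingMap_apply_eq_det_smul {k : ℕ} (b : Module.Basis (Fin k) K M)
    (g : M [⋀^Fin k]→ₗ[K] N) (v : Fin k → M) : g v = b.det v • g b := by
  have h : g = (LinearMap.toSpanSingleton K N (g b)).compAlternatingMap b.det := by
    refine b.ext_alternating fun w hw => ?_
    set e := Equiv.ofBijective w (Finite.injective_iff_bijective.mp hw)
    have hwe : (fun i => b (w i)) = b ∘ e := rfl
    rw [hwe, g.map_perm b e, LinearMap.compAlternatingMap_apply, b.det.map_perm b e,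
      b.det_self, LinearMap.toSpanSingleton_apply, Units.smul_def, Units.smul_def,
      zsmul_eq_mul, mul_one, Int.cast_smul_eq_zsmul]
  conv_lhs => rw [h]
  simp

lemma ιMulti_ne_zero_of_linearIndependent {k : ℕ} {z : Fin k → M}
    (hz : LinearIndependent K z) : ιMulti K k z ≠ 0 := by
  have h := (exteriorPower.ιMulti_family_linearIndependent_field (n := k) hz).ne_zero
    ⟨Finset.univ, Finset.card_fin k⟩
  intro h0
  apply h
  ext1
  simp only [exteriorPower.ιMulti_family, exteriorPower.ιMulti_apply_coe]
  rwa [(OrderEmbedding.strictMono _).eq_id, Function.comp_id]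

lemma exists_ιMulti_eq_smul_of_span_eq {k l : ℕ} {y : Fin k → M} {z : Fin l → M}
    (hy : LinearIndependent K y) (hz : LinearIndependent K z)
    (hspan : span K (range y) = span K (range z)) :
    ∃ c : K, c ≠ 0 ∧ ιMulti K k y = c • ιMulti K l z := by
  obtain rfl : k = l := by
    simpa [finrank_span_eq_card hy, finrank_span_eq_card hz] using
      congrArg (fun V : Submodule K M => Module.finrank K V) hspan
  set b := Module.Basis.span hz
  have hyU : ∀ i, y i ∈ span K (range z) := fun i => hspan ▸ subset_span (mem_range_self i)
  have key := b.alternatingMap_apply_eq_det_smul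
    ((ιMulti K k).compLinearMap (span K (range z)).subtype) (fun i => ⟨y i, hyU i⟩)
  have hb : (fun i => ((b i : span K (range z)) : M)) = z :=
    funext fun i => congrArg Subtype.val (Module.Basis.span_apply hz i)
  simp only [AlternatingMap.compLinearMap_apply, Submodule.coe_subtype, hb] at key
  refine ⟨_, fun h0 => ιMulti_ne_zero_of_linearIndependent hy ?_, key⟩
  rw [key, h0, zero_smul]

end Exterior

section Cones

variable {n : ℕ}

def coneSet {k : ℕ} (v : Fin k → Euc n) : Set (Euc n) :=
  {x | ∃ lam : Fin k → ℝ, (∀ i, 0 ≤ lam i) ∧ x = ∑ i, lam i • v i}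

lemma IsRatPolyCone.exists_eq_coneSet {σ : Set (Euc n)} (h : IsRatPolyCone σ) :
    ∃ (k : ℕ) (v : Fin k → Euc n), σ = coneSet v := by
  obtain ⟨k, v, -, rfl⟩ := h
  exact ⟨k, v, rfl⟩

lemma mem_coneSet_self {k : ℕ} (v : Fin k → Euc n) (i : Fin k) : v i ∈ coneSet v := by
  classical
  refine ⟨Pi.single i 1, fun j => ?_, by simp [Pi.single_apply, ite_smul]⟩
  rcases eq_or_ne j i with rfl | h <;> simp [*]

lemma span_coneSet {k : ℕ} (v : Fin k → Euc n) : span ℝ (coneSet v) = span ℝ (range v) := by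
  refine le_antisymm (span_le.mpr ?_) (span_mono (range_subset_iff.mpr (mem_coneSet_self v)))
  rintro x ⟨lam, -, rfl⟩
  exact sum_mem fun i _ => smul_mem _ _ (subset_span (mem_range_self i))

lemma inner_sum_smul_eq_zero_iff {k : ℕ} {v : Fin k → Euc n} {g : Euc n} {lam : Fin k → ℝ}
    (hg : ∀ i, 0 ≤ ⟪g, v i⟫) (hlam : ∀ i, 0 ≤ lam i) :
    ⟪g, ∑ i, lam i • v i⟫ = 0 ↔ ∀ i, lam i * ⟪g, v i⟫ = 0 := by
  simp only [inner_sum, real_inner_smul_right]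
  rw [Finset.sum_eq_zero_iff_of_nonneg fun i _ => mul_nonneg (hlam i) (hg i)]
  simp only [Finset.mem_univ, true_imp_iff]

lemma mem_dualCone_coneSet {k : ℕ} {v : Fin k → Euc n} {g : Euc n} (hg : ∀ i, 0 ≤ ⟪g, v i⟫) :
    g ∈ dualCone (coneSet v) := by
  rintro x ⟨lam, hlam, rfl⟩
  simp only [inner_sum, real_inner_smul_right]
  exact Finset.sum_nonneg fun i _ => mul_nonneg (hlam i) (hg i)

lemma IsFaceOf.subset {τ σ : Set (Euc n)} (h : IsFaceOf τ σ) : τ ⊆ σ := by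
  obtain ⟨u, -, rfl⟩ := h
  exact inter_subset_left

lemma IsFaceOf.mono {τ ρ σ : Set (Euc n)} (h : IsFaceOf τ σ) (hτρ : τ ⊆ ρ) (hρσ : ρ ⊆ σ) :
    IsFaceOf τ ρ := by
  obtain ⟨u, hu, rfl⟩ := h
  refine ⟨u, fun x hx => hu x (hρσ hx), ?_⟩
  ext x
  exact ⟨fun hx => ⟨hτρ hx, hx.2⟩, fun hx => ⟨hρσ hx.1, hx.2⟩⟩

lemma exists_mul_add_nonneg {ι : Type*} [Finite ι] {s t : ι → ℝ} (hs : ∀ i, 0 ≤ s i)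
    (ht : ∀ i, s i = 0 → 0 ≤ t i) :
    ∃ N : ℝ, ∀ i, 0 ≤ N * s i + t i ∧ (N * s i + t i = 0 → s i = 0 ∧ t i = 0) := by
  obtain ⟨N, hN⟩ := Finite.exists_le fun i => (1 + |t i|) / s i
  refine ⟨N, fun i => ?_⟩
  rcases (hs i).eq_or_lt with h0 | hpos
  · rw [← h0, mul_zero, zero_add]
    exact ⟨ht i h0.symm, fun h => ⟨rfl, h⟩⟩
  · have h1 : 1 + |t i| ≤ N * s i := (div_le_iff₀ hpos).mp (hN i)
    have h2 := neg_abs_le (t i)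
    exact ⟨by linarith, fun h => by linarith⟩

lemma IsFaceOf.trans {τ ρ σ : Set (Euc n)} (hσ : IsRatPolyCone σ) (hτρ : IsFaceOf τ ρ)
    (hρσ : IsFaceOf ρ σ) : IsFaceOf τ σ := by
  obtain ⟨k, v, rfl⟩ := hσ.exists_eq_coneSet
  obtain ⟨b, hb, rfl⟩ := hτρ
  obtain ⟨a, ha, rfl⟩ := hρσ
  -- `τ` is cut out of `σ` by `N • a + b` for `N` large
  obtain ⟨N, hN⟩ := exists_mul_add_nonneg (s := fun i => ⟪a, v i⟫) (t := fun i => ⟪b, v i⟫)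
    (fun i => ha _ (mem_coneSet_self v i)) fun i h => hb _ ⟨mem_coneSet_self v i, h⟩
  have hg : ∀ x, ⟪N • a + b, x⟫ = N * ⟪a, x⟫ + ⟪b, x⟫ := fun x => by
    rw [inner_add_left, real_inner_smul_left]
  refine ⟨N • a + b, mem_dualCone_coneSet fun i => hg _ ▸ (hN i).1, ?_⟩
  ext x
  refine ⟨fun ⟨⟨hxσ, hxa⟩, hxb⟩ => ⟨hxσ, ?_⟩, fun ⟨hxσ, hx⟩ => ?_⟩
  · rw [mem_ofPred_eq, hg, hxa.out, hxb.out, mul_zero, add_zero]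
  obtain ⟨lam, hlam, rfl⟩ := hxσ
  rw [mem_ofPred_eq, inner_sum_smul_eq_zero_iff (fun i => hg _ ▸ (hN i).1) hlam] at hx
  have hterm : ∀ i, lam i * ⟪a, v i⟫ = 0 ∧ lam i * ⟪b, v i⟫ = 0 := fun i => by
    rcases mul_eq_zero.mp (hx i) with h | h
    · simp [h]
    · obtain ⟨h₁, h₂⟩ := (hN i).2 (hg _ ▸ h)
      simp [h₁, h₂]
  simp only [mem_inter_iff, mem_ofPred_eq, inner_sum, real_inner_smul_right]
  exact ⟨⟨⟨lam, hlam, rfl⟩, Finset.sum_eq_zero fun i _ => (hterm i).1⟩,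
    Finset.sum_eq_zero fun i _ => (hterm i).2⟩

end Cones

section TwoRays

variable {n : ℕ}

/-- Modulo the span of its face `τ`, the cone `σ` is the two-dimensional cone spanned by `a`
and `c`. -/
structure TwoRaysOver (τ σ : Set (Euc n)) (a c : Euc n) : Prop where
  face : IsFaceOf τ σ
  left_mem : a ∈ σ
  right_mem : c ∈ σ
  decomp : ∀ x ∈ σ, ∃ α β : ℝ, 0 ≤ α ∧ 0 ≤ β ∧ x - α • a - β • c ∈ span ℝ τ
  coneDim_eq : coneDim σ = coneDim τ + 2

def rayFace (τ σ : Set (Euc n)) (a : Euc n) : Set (Euc n) :=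
  {x | x ∈ σ ∧ ∃ α : ℝ, x - α • a ∈ span ℝ τ}

namespace TwoRaysOver

variable {τ σ : Set (Euc n)} {a c : Euc n}

lemma symm (H : TwoRaysOver τ σ a c) : TwoRaysOver τ σ c a where
  face := H.face
  left_mem := H.right_mem
  right_mem := H.left_mem
  decomp x hx := by
    obtain ⟨α, β, hα, hβ, h⟩ := H.decomp x hx
    exact ⟨β, α, hβ, hα, by rwa [sub_right_comm]⟩
  coneDim_eq := H.coneDim_eq

lemma span_eq (H : TwoRaysOver τ σ a c) : span ℝ σ = span ℝ τ ⊔ ℝ ∙ a ⊔ ℝ ∙ c := by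
  refine le_antisymm (span_le.mpr fun x hx => ?_) ?_
  · obtain ⟨α, β, -, -, h⟩ := H.decomp x hx
    rw [show x = x - α • a - β • c + α • a + β • c by abel]
    exact add_mem (add_mem (mem_sup_left (mem_sup_left h))
      (mem_sup_left (mem_sup_right (smul_mem _ _ (mem_span_singleton_self a)))))
      (mem_sup_right (smul_mem _ _ (mem_span_singleton_self c)))
  · exact sup_le (sup_le (span_mono H.face.subset)
      ((span_singleton_le_iff_mem _ _).mpr (subset_span H.left_mem)))
      ((span_singleton_le_iff_mem _ _).mpr (subset_span H.right_mem))

lemma right_notMem (H : TwoRaysOver τ σ a c) : c ∉ span ℝ τ ⊔ ℝ ∙ a := fun hc => by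
  have h := H.coneDim_eq
  rw [coneDim, H.span_eq, sup_eq_left.mpr ((span_singleton_le_iff_mem _ _).mpr hc)] at h
  have := finrank_sup_span_singleton_le (span ℝ τ) a
  unfold coneDim at h
  omega

lemma left_notMem (H : TwoRaysOver τ σ a c) : a ∉ span ℝ τ :=
  fun ha => H.symm.right_notMem (mem_sup_left ha)

lemma subset_rayFace (H : TwoRaysOver τ σ a c) : τ ⊆ rayFace τ σ a :=
  fun x hx => ⟨H.face.subset hx, 0, by simpa using subset_span hx⟩

lemma left_mem_rayFace (H : TwoRaysOver τ σ a c) : a ∈ rayFace τ σ a :=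
  ⟨H.left_mem, 1, by simp⟩

lemma span_rayFace (H : TwoRaysOver τ σ a c) : span ℝ (rayFace τ σ a) = span ℝ τ ⊔ ℝ ∙ a := by
  refine le_antisymm (span_le.mpr fun x ⟨_, α, h⟩ => ?_) ?_
  · rw [show x = x - α • a + α • a by abel]
    exact add_mem (mem_sup_left h) (mem_sup_right (smul_mem _ _ (mem_span_singleton_self a)))
  · exact sup_le (span_mono H.subset_rayFace)
      ((span_singleton_le_iff_mem _ _).mpr (subset_span H.left_mem_rayFace))

lemma coneDim_rayFace (H : TwoRaysOver τ σ a c) : coneDim (rayFace τ σ a) = coneDim τ + 1 := by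
  rw [coneDim, H.span_rayFace, finrank_sup_span_singleton H.left_notMem, coneDim]

lemma inter_eq_rayFace (H : TwoRaysOver τ σ a c) {g : Euc n}
    (hgτ : ∀ x ∈ span ℝ τ, ⟪g, x⟫ = 0) (hga : ⟪g, a⟫ = 0) (hgc : 0 < ⟪g, c⟫) :
    σ ∩ {x | ⟪g, x⟫ = 0} = rayFace τ σ a := by
  ext x
  refine ⟨fun ⟨hx, hgx⟩ => ⟨hx, ?_⟩, fun ⟨hx, α, h⟩ => ⟨hx, ?_⟩⟩
  · obtain ⟨α, β, -, -, h⟩ := H.decomp x hx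
    have hβ : β * ⟪g, c⟫ = 0 := by
      rw [← hgx.out, inner_eq_of_sub_sub_mem hgτ h, hga, mul_zero, zero_add]
    obtain rfl : β = 0 := (mul_eq_zero.mp hβ).resolve_right hgc.ne'
    exact ⟨α, by simpa using h⟩
  · have := hgτ _ h
    rwa [inner_sub_right, real_inner_smul_right, hga, mul_zero, sub_zero] at this

lemma isFaceOf_rayFace (H : TwoRaysOver τ σ a c) : IsFaceOf (rayFace τ σ a) σ := by
  obtain ⟨g, hg, hgc⟩ := exists_inner_pos_of_notMem H.right_notMem
  have hgτ : ∀ x ∈ span ℝ τ, ⟪g, x⟫ = 0 := fun x hx => hg x (mem_sup_left hx)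
  have hga : ⟪g, a⟫ = 0 := hg a (mem_sup_right (mem_span_singleton_self a))
  refine ⟨g, fun x hx => ?_, (H.inter_eq_rayFace hgτ hga hgc).symm⟩
  obtain ⟨α, β, -, hβ, h⟩ := H.decomp x hx
  rw [inner_eq_of_sub_sub_mem hgτ h, hga, mul_zero, zero_add]
  exact mul_nonneg hβ hgc.le

lemma isFaceOf_rayFace_left (H : TwoRaysOver τ σ a c) : IsFaceOf τ (rayFace τ σ a) :=
  H.face.mono H.subset_rayFace H.isFaceOf_rayFace.subset

lemma rayFace_ne (H : TwoRaysOver τ σ a c) : rayFace τ σ a ≠ rayFace τ σ c := fun h => by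
  apply H.symm.right_notMem
  rw [← H.symm.span_rayFace, ← h]
  exact subset_span H.left_mem_rayFace

lemma eq_rayFace_or_eq_rayFace (H : TwoRaysOver τ σ a c) {ρ : Set (Euc n)}
    (hρσ : IsFaceOf ρ σ) (hτρ : τ ⊆ ρ) (hρ : coneDim ρ = coneDim τ + 1) :
    ρ = rayFace τ σ a ∨ ρ = rayFace τ σ c := by
  obtain ⟨h, hh, rfl⟩ := hρσ
  have hhτ : ∀ x ∈ span ℝ τ, ⟪h, x⟫ = 0 :=
    fun x hx => inner_eq_zero_of_mem_span (fun y hy => (hτρ hy).2) hx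
  rcases (hh a H.left_mem).eq_or_lt with ha | ha <;>
    rcases (hh c H.right_mem).eq_or_lt with hc | hc
  · -- then `ρ = σ`
    refine absurd hρ (ne_of_eq_of_ne (congrArg coneDim ?_) (by rw [H.coneDim_eq]; omega))
    refine inter_eq_left.mpr fun x hx => ?_
    obtain ⟨α, β, -, -, hx⟩ := H.decomp x hx
    simp [inner_eq_of_sub_sub_mem hhτ hx, ← ha, ← hc]
  · exact Or.inl (H.inter_eq_rayFace hhτ ha.symm hc)
  · exact Or.inr (H.symm.inter_eq_rayFace hhτ hc.symm ha)
  · -- then `ρ ⊆ span ℝ τ`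
    refine absurd hρ (ne_of_lt (Nat.lt_succ_of_le (Submodule.finrank_mono (span_le.mpr ?_))))
    rintro x ⟨hx, hhx⟩
    obtain ⟨α, β, hα, hβ, h'⟩ := H.decomp x hx
    have := hhx.out.symm.trans (inner_eq_of_sub_sub_mem hhτ h')
    have hα0 : α * ⟪h, a⟫ = 0 := by linarith [mul_nonneg hα ha.le, mul_nonneg hβ hc.le]
    have hβ0 : β * ⟪h, c⟫ = 0 := by linarith [mul_nonneg hα ha.le, mul_nonneg hβ hc.le]
    obtain rfl := (mul_eq_zero.mp hα0).resolve_right ha.ne'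
    obtain rfl := (mul_eq_zero.mp hβ0).resolve_right hc.ne'
    simpa using h'

end TwoRaysOver

end TwoRays

section TwoRaysExist

variable {n : ℕ}

lemma exists_nonneg_comb_of_div_mem_Icc {s t s₁ t₁ s₂ t₂ : ℝ} (hs : 0 < s) (hs₁ : 0 < s₁)
    (hs₂ : 0 < s₂) (h : t / s ∈ Icc (t₁ / s₁) (t₂ / s₂)) :
    ∃ α β : ℝ, 0 ≤ α ∧ 0 ≤ β ∧ s = α * s₁ + β * s₂ ∧ t = α * t₁ + β * t₂ := by
  rw [← segment_eq_Icc (h.1.trans h.2)] at h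
  obtain ⟨p, q, hp, hq, hpq, hθ⟩ := h
  refine ⟨p * s / s₁, q * s / s₂, by positivity, by positivity, ?_, ?_⟩
  · rw [div_mul_cancel₀ _ hs₁.ne', div_mul_cancel₀ _ hs₂.ne']
    linear_combination -s * hpq
  · rw [(div_eq_iff hs.ne').mp hθ.symm, smul_eq_mul, smul_eq_mul]
    field_simp

lemma exists_decomp_of_mem_coneSet {k : ℕ} {v : Fin k → Euc n} {W : Submodule ℝ (Euc n)}
    {a c : Euc n} (hv : ∀ i, ∃ α β : ℝ, 0 ≤ α ∧ 0 ≤ β ∧ v i - α • a - β • c ∈ W) :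
    ∀ x ∈ coneSet v, ∃ α β : ℝ, 0 ≤ α ∧ 0 ≤ β ∧ x - α • a - β • c ∈ W := by
  choose α β hα hβ hW using hv
  rintro x ⟨lam, hlam, rfl⟩
  refine ⟨∑ i, lam i * α i, ∑ i, lam i * β i,
    Finset.sum_nonneg fun i _ => mul_nonneg (hlam i) (hα i),
    Finset.sum_nonneg fun i _ => mul_nonneg (hlam i) (hβ i), ?_⟩
  have : ∑ i, lam i • v i - (∑ i, lam i * α i) • a - (∑ i, lam i * β i) • c
      = ∑ i, lam i • (v i - α i • a - β i • c) := by
    simp only [Finset.sum_smul, smul_sub, mul_smul, Finset.sum_sub_distrib]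
  rw [this]
  exact sum_mem fun i _ => smul_mem _ _ (hW i)

lemma exists_inner_pos_of_coneDim_lt {k : ℕ} {v : Fin k → Euc n} {u : Euc n} {τ : Set (Euc n)}
    (hu : u ∈ dualCone (coneSet v)) (hτ : τ = coneSet v ∩ {x | ⟪u, x⟫ = 0})
    (hdim : coneDim τ < coneDim (coneSet v)) : ∃ i, 0 < ⟪u, v i⟫ := by
  by_contra! h
  have hle : span ℝ (coneSet v) ≤ span ℝ τ := by
    rw [span_coneSet, span_le, range_subset_iff]
    exact fun i => subset_span (hτ ▸
      ⟨mem_coneSet_self v i, le_antisymm (h i) (hu _ (mem_coneSet_self v i))⟩)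
  exact hdim.not_ge (Submodule.finrank_mono hle)

/-- `a` and `c` are the generators of `σ` of extreme slope `⟪b, v⟫ / ⟪u, v⟫`, where `u` cuts
`τ` out of `σ` and `⟪u, ·⟫, ⟪b, ·⟫` together cut `span τ` out of `span σ`. -/
theorem exists_twoRaysOver {τ σ : Set (Euc n)} (hσ : IsRatPolyCone σ) (hτσ : IsFaceOf τ σ)
    (hdim : coneDim σ = coneDim τ + 2) : ∃ a c, TwoRaysOver τ σ a c := by
  obtain ⟨k, v, rfl⟩ := hσ.exists_eq_coneSet
  obtain ⟨u, hu, hτ⟩ := id hτσ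
  have hs : ∀ i, 0 ≤ ⟪u, v i⟫ := fun i => hu _ (mem_coneSet_self v i)
  have huτ : ∀ x ∈ span ℝ τ, ⟪u, x⟫ = 0 :=
    fun x => inner_eq_zero_of_mem_span fun y hy => (hτ ▸ hy).2
  set I := Finset.univ.filter fun i => 0 < ⟪u, v i⟫
  have hI : ∀ i, i ∈ I ↔ 0 < ⟪u, v i⟫ := by simp [I]
  obtain ⟨i₀, hi₀⟩ := exists_inner_pos_of_coneDim_lt hu hτ (by omega)
  obtain ⟨b, hb⟩ := exists_forall_inner_eq_zero_imp_mem (span_mono hτσ.subset) hdim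
    (subset_span (mem_coneSet_self v i₀)) huτ hi₀.ne'
  set θ : Fin k → ℝ := fun i => ⟪b, v i⟫ / ⟪u, v i⟫
  obtain ⟨m, hm, hmin⟩ := I.exists_min_image θ ⟨i₀, (hI i₀).mpr hi₀⟩
  obtain ⟨M, hM, hmax⟩ := I.exists_max_image θ ⟨i₀, (hI i₀).mpr hi₀⟩
  refine ⟨v m, v M, ⟨hτσ, mem_coneSet_self v m, mem_coneSet_self v M,
    exists_decomp_of_mem_coneSet fun i => ?_, hdim⟩⟩
  rcases (hs i).eq_or_lt with h0 | hi
  · exact ⟨0, 0, le_rfl, le_rfl,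
      by simpa using subset_span (hτ ▸ ⟨mem_coneSet_self v i, h0.symm⟩)⟩
  obtain ⟨α, β, hα, hβ, hsu, htb⟩ := exists_nonneg_comb_of_div_mem_Icc hi ((hI m).mp hm)
    ((hI M).mp hM) ⟨hmin i ((hI i).mpr hi), hmax i ((hI i).mpr hi)⟩
  refine ⟨α, β, hα, hβ, hb _ ?_ ?_ ?_⟩
  · exact sub_mem (sub_mem (subset_span (mem_coneSet_self v i))
      (smul_mem _ _ (subset_span (mem_coneSet_self v m))))
      (smul_mem _ _ (subset_span (mem_coneSet_self v M)))
  · rw [inner_sub_smul_sub_smul, hsu]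
    ring
  · rw [inner_sub_smul_sub_smul, htb]
    ring

end TwoRaysExist

section Orientation

variable {n : ℕ}

lemma IsOrientationOf.ne_zero {V : Submodule ℝ (Euc n)} {ω : ExteriorAlgebra ℝ (Euc n)}
    (h : IsOrientationOf V ω) : ω ≠ 0 := by
  obtain ⟨x, hx, -, rfl⟩ := h
  rw [← ιMulti_apply]
  exact ιMulti_ne_zero_of_linearIndependent hx

lemma IsOrientationOf.exists_ι_mul_eq_smul {V : Submodule ℝ (Euc n)} {w : Euc n}
    {ωV ωU : ExteriorAlgebra ℝ (Euc n)} (hV : IsOrientationOf V ωV)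
    (hU : IsOrientationOf (V ⊔ ℝ ∙ w) ωU) (hw : w ∉ V) :
    ∃ c : ℝ, c ≠ 0 ∧ ι ℝ w * ωV = c • ωU := by
  obtain ⟨x, hx, hxV, rfl⟩ := hV
  obtain ⟨y, hy, hyU, rfl⟩ := hU
  have hcons : LinearIndependent ℝ (Fin.cons w x : Fin _ → Euc n) :=
    hx.finCons (by rwa [hxV])
  have hspan : span ℝ (range (Fin.cons w x : Fin _ → Euc n)) = span ℝ (range y) := by
    rw [Fin.range_cons, span_insert, hxV, hyU, sup_comm]
  obtain ⟨c, hc, h⟩ := exists_ιMulti_eq_smul_of_span_eq hcons hy hspan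
  refine ⟨c, hc, ?_⟩
  rw [← ιMulti_apply, ← ιMulti_apply, ← h, ιMulti_succ_apply, Fin.cons_zero]
  rfl

lemma IsIncidenceSign.exists_ι_mul_eq_smul {Δ : Set (Set (Euc n))}
    {ω : Set (Euc n) → ExteriorAlgebra ℝ (Euc n)} {ε : Set (Euc n) → Set (Euc n) → ℤ}
    (hε : IsIncidenceSign Δ ω ε) (hω : IsFanOrientation Δ ω) {τ ρ : Set (Euc n)} (hτ : τ ∈ Δ)
    (hρ : ρ ∈ Δ) (hτρ : IsFaceOf τ ρ) {w : Euc n} (hwρ : w ∈ ρ) (hwτ : w ∉ span ℝ τ)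
    (hspan : span ℝ ρ = span ℝ τ ⊔ ℝ ∙ w) :
    ∃ c : ℝ, ι ℝ w * ω τ = c • ω ρ ∧ ε τ ρ = SignType.sign c := by
  have hωρ := hω ρ hρ
  rw [hspan] at hωρ
  obtain ⟨c, hc, h⟩ := (hω τ hτ).exists_ι_mul_eq_smul hωρ hwτ
  have hdim : coneDim ρ = coneDim τ + 1 := by
    rw [coneDim, hspan, finrank_sup_span_singleton hwτ, coneDim]
  obtain ⟨hpm, hpos⟩ := hε τ hτ ρ hρ hτρ hdim
  have hpos := hpos w ⟨hwρ, hwτ⟩ c h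
  refine ⟨c, h, ?_⟩
  rcases hpm with h1 | h1
  · rw [h1, sign_pos (hpos.mp h1)]
    rfl
  · have hneg : c < 0 := hc.lt_of_le (not_lt.mp fun h => by simpa [h1] using hpos.mpr h)
    rw [h1, sign_neg hneg]
    rfl

/-- The two paths from `τ` up to `σ` wedge `a` and `c` onto `ω τ` in opposite orders. -/
lemma TwoRaysOver.incidence_mul_add_incidence_mul_eq_zero {Δ : Set (Set (Euc n))}
    {ω : Set (Euc n) → ExteriorAlgebra ℝ (Euc n)} {ε : Set (Euc n) → Set (Euc n) → ℤ}
    (hΔ : IsFan Δ) (hω : IsFanOrientation Δ ω) (hε : IsIncidenceSign Δ ω ε)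
    {τ σ : Set (Euc n)} {a c : Euc n} (H : TwoRaysOver τ σ a c) (hτ : τ ∈ Δ) (hσ : σ ∈ Δ) :
    ε τ (rayFace τ σ a) * ε (rayFace τ σ a) σ + ε τ (rayFace τ σ c) * ε (rayFace τ σ c) σ
      = 0 := by
  have hρa := hΔ.face_mem σ hσ _ H.isFaceOf_rayFace
  have hρc := hΔ.face_mem σ hσ _ H.symm.isFaceOf_rayFace
  obtain ⟨c₁, h₁, e₁⟩ := hε.exists_ι_mul_eq_smul hω hτ hρa H.isFaceOf_rayFace_left
    H.left_mem_rayFace H.left_notMem H.span_rayFace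
  obtain ⟨d₁, h₁', e₁'⟩ := hε.exists_ι_mul_eq_smul hω hρa hσ H.isFaceOf_rayFace
    H.right_mem (by rw [H.span_rayFace]; exact H.right_notMem)
    (by rw [H.span_rayFace, H.span_eq])
  obtain ⟨c₂, h₂, e₂⟩ := hε.exists_ι_mul_eq_smul hω hτ hρc H.symm.isFaceOf_rayFace_left
    H.symm.left_mem_rayFace H.symm.left_notMem H.symm.span_rayFace
  obtain ⟨d₂, h₂', e₂'⟩ := hε.exists_ι_mul_eq_smul hω hρc hσ H.symm.isFaceOf_rayFace
    H.left_mem (by rw [H.symm.span_rayFace]; exact H.symm.right_notMem)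
    (by rw [H.symm.span_rayFace, H.span_eq, sup_right_comm])
  have hkey : (c₂ * d₂) • ω σ = -(c₁ * d₁) • ω σ := by
    rw [← smul_smul, ← h₂', ← mul_smul_comm, ← h₂, ← mul_assoc,
      eq_neg_of_add_eq_zero_left (ι_add_mul_swap a c), neg_mul, mul_assoc, h₁, mul_smul_comm,
      h₁', smul_smul, neg_smul]
  have hcd : c₂ * d₂ = -(c₁ * d₁) := smul_left_injective ℝ (hω σ hσ).ne_zero hkey
  rw [e₁, e₁', e₂, e₂', ← SignType.coe_mul, ← SignType.coe_mul, ← sign_mul, ← sign_mul, hcd,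
    Left.sign_neg, SignType.coe_neg, add_neg_cancel]

end Orientation

lemma sum_ite_mul_sum_ite {A B R : Type*} [Fintype A] [Fintype B] [CommRing R] (P : B → Prop)
    [DecidablePred P] (Q : A → B → Prop) [∀ a b, Decidable (Q a b)] (e : B → R)
    (e' : A → B → R) (x : A → R) :
    ∑ b, (if P b then e b * ∑ a, (if Q a b then e' a b * x a else 0) else 0)
      = ∑ a, (∑ b, if P b ∧ Q a b then e' a b * e b else 0) * x a := by
  have h : ∀ b, (if P b then e b * ∑ a, (if Q a b then e' a b * x a else 0) else 0)
      = ∑ a, (if P b ∧ Q a b then e' a b * e b else 0) * x a := fun b => by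
    by_cases hP : P b <;> simp [hP, Finset.mul_sum, mul_ite, mul_left_comm, mul_comm]
  simp only [h, Finset.sum_mul]
  exact Finset.sum_comm

section Fan

variable {n : ℕ} {Δ : Set (Set (Euc n))} {ω : Set (Euc n) → ExteriorAlgebra ℝ (Euc n)}
  {ε : Set (Euc n) → Set (Euc n) → ℤ}

lemma IsFan.finite_conesOfCodim (hΔ : IsFan Δ) (k : ℕ) : (ConesOfCodim n Δ k).Finite :=
  hΔ.finite.subset fun _ h => h.1

lemma sum_incidence_mul_incidence_eq_zero (hΔ : IsFan Δ) (hω : IsFanOrientation Δ ω)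
    (hε : IsIncidenceSign Δ ω ε) (R : Type*) [CommRing R] {j : ℕ} (hj : j + 2 ≤ n)
    [Fintype (ConesOfCodim n Δ (j + 1))] (σ : ConesOfCodim n Δ j)
    (τ : ConesOfCodim n Δ (j + 2))
    [∀ ρ : ConesOfCodim n Δ (j + 1), Decidable (IsFaceOf ρ.1 σ.1 ∧ IsFaceOf τ.1 ρ.1)] :
    ∑ ρ : ConesOfCodim n Δ (j + 1),
      (if IsFaceOf ρ.1 σ.1 ∧ IsFaceOf τ.1 ρ.1 then (ε τ ρ : R) * ε ρ σ else 0) = 0 := by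
  by_cases hex : ∃ ρ : ConesOfCodim n Δ (j + 1), IsFaceOf ρ.1 σ.1 ∧ IsFaceOf τ.1 ρ.1
  swap
  · exact Finset.sum_eq_zero fun ρ _ => if_neg fun h => hex ⟨ρ, h⟩
  obtain ⟨ρ₀, hρ₀σ, hτρ₀⟩ := hex
  obtain ⟨hσΔ, hσ⟩ := σ.2
  obtain ⟨hτΔ, hτ⟩ := τ.2
  have hcodim : n - (j + 1) = coneDim τ.1 + 1 := by omega
  obtain ⟨a, c, H⟩ := exists_twoRaysOver (hΔ.poly _ hσΔ) (hτρ₀.trans (hΔ.poly _ hσΔ) hρ₀σ)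
    (by omega)
  let ρa : ConesOfCodim n Δ (j + 1) :=
    ⟨rayFace τ σ a, hΔ.face_mem _ hσΔ _ H.isFaceOf_rayFace, H.coneDim_rayFace.trans hcodim.symm⟩
  let ρc : ConesOfCodim n Δ (j + 1) :=
    ⟨rayFace τ σ c, hΔ.face_mem _ hσΔ _ H.symm.isFaceOf_rayFace,
      H.symm.coneDim_rayFace.trans hcodim.symm⟩
  have hfilter : Finset.univ.filter (fun ρ : ConesOfCodim n Δ (j + 1) =>
      IsFaceOf ρ.1 σ.1 ∧ IsFaceOf τ.1 ρ.1) = {ρa, ρc} := by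
    ext ρ
    simp only [Finset.mem_filter, Finset.mem_univ, true_and, Finset.mem_insert,
      Finset.mem_singleton]
    constructor
    · rintro ⟨hρσ, hτρ⟩
      rcases H.eq_rayFace_or_eq_rayFace hρσ hτρ.subset (ρ.2.2.trans hcodim) with h | h
      exacts [Or.inl (Subtype.ext h), Or.inr (Subtype.ext h)]
    · rintro (rfl | rfl)
      exacts [⟨H.isFaceOf_rayFace, H.isFaceOf_rayFace_left⟩,
        ⟨H.symm.isFaceOf_rayFace, H.symm.isFaceOf_rayFace_left⟩]
  rw [← Finset.sum_filter, hfilter,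
    Finset.sum_pair fun h => H.rayFace_ne (congrArg Subtype.val h)]
  exact_mod_cast congrArg (Int.cast : ℤ → R)
    (H.incidence_mul_add_incidence_mul_eq_zero hΔ hω hε hτΔ hσΔ)

end Fan

/-- For an oriented complete fan `Δ` in `ℝ^n` and a
commutative ring `R`, the maps `d_k : Č_k(Δ,R) → Č_{k−1}(Δ,R)` satisfy
`d_{k−1} ∘ d_k = 0` for all `2 ≤ k ≤ n` (here `k = j + 2`); that is,
`Č_*(Δ,R)` is a chain complex of `R`-modules. -/
theorem cech_complex_d_squared_zero {n : ℕ}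
    (Δ : Set (Set (Euc n))) (hΔ : IsCompleteFan Δ)
    (ω : Set (Euc n) → ExteriorAlgebra ℝ (Euc n)) (hω : IsFanOrientation Δ ω)
    (ε : Set (Euc n) → Set (Euc n) → ℤ) (hε : IsIncidenceSign Δ ω ε)
    (R : Type*) [CommRing R] :
    ∀ j : ℕ, j + 2 ≤ n → ∀ x : ConesOfCodim n Δ (j + 2) → R,
      cechD Δ ε R j (cechD Δ ε R (j + 1) x) = 0 := by
  classical
  intro j hj x
  have := (hΔ.1.finite_conesOfCodim j).fintype
  have := (hΔ.1.finite_conesOfCodim (j + 1)).fintype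
  have := (hΔ.1.finite_conesOfCodim (j + 2)).fintype
  funext σ
  simp only [cechD, finsum_eq_sum_of_fintype]
  rw [sum_ite_mul_sum_ite]
  exact Finset.sum_eq_zero fun τ _ => by
    rw [sum_incidence_mul_incidence_eq_zero hΔ.1 hω hε R hj σ τ, zero_mul]
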